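/- Let X = {x_0, x_1}, let c ∈ ℝ⟨⟨X⟩⟩ have relative degree r_c, and let d ∈ ℝ⟨⟨X⟩⟩ with d(𝟙) ≠ 0. Then the multiplicative mixed composition product c ⟲ d has relative degree r_c. -/

import Mathlib

open scoped BigOperators

namespace CFS

noncomputable section

/-- The alphabet `X = {x_0, x_1, ..., x_m}`: `none` encodes `x_0`, `some i` encodes `x_{i+1}`. -/
abbrev Letter (m : ℕ) := Option (Fin m)

/-- Words over the alphabet `X`. -/
abbrev Word (m : ℕ) := List (Letter m)

/-- Formal power series `ℝ⟨⟨X⟩⟩`: coefficient functions on words. -/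
abbrev FPS (m : ℕ) := Word m → ℝ

/-- Tuples of series `ℝ^ℓ⟨⟨X⟩⟩`. -/
abbrev FPST (m ℓ : ℕ) := Fin ℓ → FPS m

/-- The series `𝟙` (coefficient 1 at the empty word). -/
def unit (m : ℕ) : FPS m := fun w => if w = [] then 1 else 0

/-- The tuple `1l = (𝟙,...,𝟙)`. -/
def unitT (m ℓ : ℕ) : FPST m ℓ := fun _ => unit m

/-- Left concatenation of a series by the letter `x`. -/
def lc {m : ℕ} (x : Letter m) (c : FPS m) : FPS m :=
  fun w => match w with
  | [] => 0
  | y :: u => if y = x then c u else 0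

/-- The shuffle product `c ⧢ d`, given by the coefficientwise recursion dual to the
word recursion `(x u) ⧢ (y v) = x(u ⧢ (y v)) + y((x u) ⧢ v)`, `𝟙 ⧢ η = η ⧢ 𝟙 = η`:
left shifts act as derivations. -/
def sh {m : ℕ} : FPS m → FPS m → FPS m
  | c, d, [] => c [] * d []
  | c, d, x :: w => sh (fun u => c (x :: u)) d w + sh c (fun u => d (x :: u)) w

/-- Componentwise shuffle on tuples. -/
def shT {m ℓ : ℕ} (c d : FPST m ℓ) : FPST m ℓ := fun i => sh (c i) (d i)

/-- A tuple is purely improper when each component has a nonzero constant coefficient. -/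
def PurelyImproper {m ℓ : ℕ} (c : FPST m ℓ) : Prop := ∀ i, c i [] ≠ 0

/-- `η ⟲ d` on a word `η`. -/
def wmc {m : ℕ} (d : FPST m m) : Word m → FPS m
  | [] => unit m
  | none :: η => lc none (wmc d η)
  | some i :: η => lc (some i) (sh (d i) (wmc d η))

/-- Multiplicative mixed composition product `c ⟲ d := Σ_η c(η)(η ⟲ d)`.
Since `η ⟲ d` is supported on words of length `≥ |η|`, only words `η` of length
`≤ |w|` contribute to the coefficient at `w`. -/
def mc {m : ℕ} (c : FPS m) (d : FPST m m) : FPS m :=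
  fun w => ∑ k ∈ Finset.range (w.length + 1),
    ∑ η : Fin k → Letter m, c (List.ofFn η) * wmc d (List.ofFn η) w

/-- `⟲` on tuples (componentwise in the left argument). -/
def mcT {m ℓ : ℕ} (c : FPST m ℓ) (d : FPST m m) : FPST m ℓ := fun i => mc (c i) d

/-- `ψ_d(η)(𝟙)`, where `ψ_d(x'_0)(e) = x_0(𝟙 ⧢ e)` and `ψ_d(x'_i)(e) = x_0(d_i ⧢ e)`. -/
def wcomp {m ℓ : ℕ} (d : FPST m ℓ) : Word ℓ → FPS m
  | [] => unit m
  | none :: η => lc none (sh (unit m) (wcomp d η))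
  | some i :: η => lc none (sh (d i) (wcomp d η))

/-- Composition product `c ∘ d := Σ_η c(η) ψ_d(η)(𝟙)`; since `ψ_d(η)(𝟙)` is supported
on words of length `≥ |η|`, only `η` with `|η| ≤ |w|` contribute at `w`. -/
def comp {m ℓ : ℕ} (c : FPS ℓ) (d : FPST m ℓ) : FPS m :=
  fun w => ∑ k ∈ Finset.range (w.length + 1),
    ∑ η : Fin k → Letter ℓ, c (List.ofFn η) * wcomp d (List.ofFn η) w

/-- `∘` componentwise in the left argument. -/
def compT {m ℓ q : ℕ} (c : FPST ℓ q) (d : FPST m ℓ) : FPST m q := fun i => comp (c i) d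

/-- Multiplicative composition product `c ⋆ d := d ⧢ (c ⟲ d)`. -/
def star {m : ℕ} (c d : FPST m m) : FPST m m := fun i => sh (d i) (mc (c i) d)

/-- Iteration of `e ↦ c(𝟙)⁻¹ ⬝ (𝟙 − c' ⧢ e)` (with `c'` the proper part of `c`),
whose fixed point is the shuffle inverse of `c` when `c(𝟙) ≠ 0`. -/
def shInvAux {m : ℕ} (c : FPS m) : ℕ → FPS m
  | 0 => fun _ => 0
  | n + 1 => fun w =>
      (c [])⁻¹ * (unit m w - sh (fun u => if u = [] then 0 else c u) (shInvAux c n) w)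

/-- Shuffle inverse `c^{⧢-1}` (the coefficient at `w` stabilizes after `|w|+1` iterations). -/
def shInv {m : ℕ} (c : FPS m) : FPS m := fun w => shInvAux c (w.length + 1) w

/-- Componentwise shuffle inverse of a tuple. -/
def shInvT {m ℓ : ℕ} (c : FPST m ℓ) : FPST m ℓ := fun i => shInv (c i)

/-- Iteration of the strong contraction `e ↦ d^{⧢-1} ⟲ e`, whose fixed point is `d^{⋆-1}`. -/
def starInvAux {m : ℕ} (d : FPST m m) : ℕ → FPST m m
  | 0 => fun _ _ => 0
  | n + 1 => mcT (shInvT d) (starInvAux d n)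

/-- `⋆`-inverse `d^{⋆-1}` of a purely improper tuple. -/
def starInv {m : ℕ} (d : FPST m m) : FPST m m := fun i w => starInvAux d (w.length + 1) i w

/-- Multiplicative dynamic feedback product `c @̌ d := c ⟲ (d^{⧢-1} ∘ c)^{⋆-1}`. -/
def fb {m q : ℕ} (c : FPST m q) (d : FPST q m) : FPST m q :=
  mcT c (starInv (compT (shInvT d) c))

/-- Valuation: minimal length of a word in the support (`⊤` for the zero series). -/
def val {m : ℕ} (c : FPS m) : ℕ∞ :=
  sInf ((fun w : Word m => (w.length : ℕ∞)) '' {w | c w ≠ 0})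

/-- Valuation of a tuple: minimum over components. -/
def valT {m ℓ : ℕ} (c : FPST m ℓ) : ℕ∞ := ⨅ i, val (c i)

/-- `σ^v` for `v : ℕ∞`, with `σ^∞ = 0`; so `κ(a,b) = enpow σ (val (a-b))`. -/
def enpow (σ : ℝ) (v : ℕ∞) : ℝ := if v = ⊤ then 0 else σ ^ v.toNat

/-- The natural part `c_N`: restriction of `c` to words in the letter `x_0` only. -/
def natPart {m : ℕ} (c : FPS m) : FPS m :=
  fun w => if ∀ x ∈ w, x = (none : Letter m) then c w else 0

/-- The forced part `c_F := c − c_N`. -/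
def forcedPart {m : ℕ} (c : FPS m) : FPS m := fun w => c w - natPart c w

/-- `c` has (finite) class `r ≥ 1`: `supp(c_F) ⊆ x_0^{r-1}X^+` and `supp(c_F) ⊄ x_0^r X^+`. -/
def hasClassF {m : ℕ} (c : FPS m) (r : ℕ) : Prop :=
  1 ≤ r ∧
  (∀ w, forcedPart c w ≠ 0 → ∃ v, v ≠ [] ∧ w = List.replicate (r - 1) (none : Letter m) ++ v) ∧
  ¬ (∀ w, forcedPart c w ≠ 0 → ∃ v, v ≠ [] ∧ w = List.replicate r (none : Letter m) ++ v)

/-- `𝒞(c) = r` for `r : ℕ∞`, with `𝒞(c) = ∞` iff `c_F = 0`. -/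
def hasClass {m : ℕ} (c : FPS m) (r : ℕ∞) : Prop :=
  (r = ⊤ ∧ forcedPart c = fun _ => 0) ∨ ∃ n : ℕ, r = (n : ℕ∞) ∧ hasClassF c n

/-- `c` has relative degree `r`: `𝒞(c) = r` and `x_0^{r-1} x_1 ∈ supp(c_F)`. -/
def hasRelDeg (c : FPS 1) (r : ℕ) : Prop :=
  hasClassF c r ∧
  forcedPart c (List.replicate (r - 1) (none : Letter 1) ++ [some 0]) ≠ 0

/-- `⟲` for single (SISO, `m = 1`) series. -/
def mc1 (c d : FPS 1) : FPS 1 := mc c (fun _ => d)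

/-- The multiplicative dynamic feedback product for single (SISO) series. -/
def fb1 (c d : FPS 1) : FPS 1 :=
  mc c (starInv (compT (fun _ : Fin 1 => shInv d) (fun _ : Fin 1 => c)))

end

end CFS

namespace CFSAux
open CFS

/-- On a pure word (all `x_0`), `wmc d η` is the indicator of `η = w`. -/
lemma wmc_pure (d : FPST 1 1) : ∀ (η w : Word 1), (∀ x ∈ w, x = none) →
    wmc d η w = if η = w then 1 else 0
  | [], w, hw => by
      simp only [wmc, unit]
      by_cases h : w = [] <;> simp [h, eq_comm]
  | (none :: η), w, hw => by
      cases w with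
      | nil => simp [wmc, lc]
      | cons y u =>
        have hy : y = none := hw y (by simp)
        subst hy
        have := wmc_pure d η u (fun x hx => hw x (by simp [hx]))
        simp [wmc, lc, this]
  | (some i :: η), w, hw => by
      cases w with
      | nil => simp [wmc, lc]
      | cons y u =>
        have hy : y = none := hw y (by simp)
        subst hy
        simp [wmc, lc]

/-- If `wmc d η` is nonzero at a word `x_0^j x_1 v`, then `η = x_0^j x_1 η'`. -/
lemma wmc_shape (d : FPST 1 1) : ∀ (j : ℕ) (η v : Word 1),
    wmc d η (List.replicate j none ++ some 0 :: v) ≠ 0 →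
    ∃ η', η = List.replicate j none ++ some 0 :: η'
  | 0, η, v, h => by
      cases η with
      | nil => simp [wmc, unit] at h
      | cons y η' =>
        cases y with
        | none => simp [wmc, lc] at h
        | some i => exact ⟨η', by simp [Subsingleton.elim i 0]⟩
  | (j+1), η, v, h => by
      rw [List.replicate_succ, List.cons_append] at h
      cases η with
      | nil => simp [wmc, unit] at h
      | cons y η' =>
        cases y with
        | none =>
          have h' : wmc d η' (List.replicate j none ++ some 0 :: v) ≠ 0 := by
            simpa [wmc, lc] using h
          obtain ⟨η'', hη⟩ := wmc_shape d j η' v h'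
          exact ⟨η'', by simp [hη, List.replicate_succ]⟩
        | some i => simp [wmc, lc] at h

/-- Value of `wmc d η` at the word `x_0^j x_1`, for short `η`. -/
lemma wmc_target (d : FPST 1 1) : ∀ (j : ℕ) (η : Word 1), η.length ≤ j + 1 →
    wmc d η (List.replicate j none ++ [some 0]) =
      if η = List.replicate j none ++ [some 0] then d 0 [] else 0
  | 0, η, hlen => by
      cases η with
      | nil => simp [wmc, unit]
      | cons y η' =>
        have hη' : η' = [] := by
          simpa using List.eq_nil_of_length_eq_zero (by simpa using hlen)
        subst hη'
        cases y with
        | none => simp [wmc, lc]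
        | some i =>
          have hi : i = 0 := Subsingleton.elim i 0
          subst hi
          simp [wmc, lc, sh, unit]
  | (j+1), η, hlen => by
      rw [List.replicate_succ, List.cons_append]
      cases η with
      | nil => simp [wmc, unit]
      | cons y η' =>
        cases y with
        | none =>
          have := wmc_target d j η' (by simpa using hlen)
          simp [wmc, lc, this]
        | some i => simp [wmc, lc]

/-- Summation helper: in the `mc` sum, only the word `w` itself contributes. -/
lemma sum_helper (f : Word 1 → ℝ) (A : ℝ) (w : Word 1) (n : ℕ) (hw : w.length ≤ n) :
    (∑ k ∈ Finset.range (n+1), ∑ η : Fin k → Letter 1,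
      f (List.ofFn η) * (if List.ofFn η = w then A else 0)) = f w * A := by
  rw [Finset.sum_eq_single w.length]
  · rw [Fintype.sum_eq_single (w.get)]
    · simp [List.ofFn_get]
    · intro η hη
      have : List.ofFn η ≠ w := by
        intro h
        exact hη (List.ofFn_injective (h.trans (List.ofFn_get w).symm))
      simp [this]
  · intro k _ hne
    apply Finset.sum_eq_zero
    intro η _
    have : List.ofFn η ≠ w := by
      intro h
      apply hne
      simpa using (congrArg List.length h)
    simp [this]
  · intro h
    exact absurd (Finset.mem_range.mpr (by omega)) h

/-- Every impure word over `X = {x_0, x_1}` factors as `x_0^j x_1 v`. -/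
lemma decomp : ∀ (w : Word 1), ¬ (∀ x ∈ w, x = (none : Letter 1)) →
    ∃ j v, w = List.replicate j none ++ some 0 :: v
  | [], hw => by simp at hw
  | (y :: u), hw => by
      cases y with
      | some i => exact ⟨0, u, by simp [Subsingleton.elim i 0]⟩
      | none =>
        have hu : ¬ (∀ x ∈ u, x = (none : Letter 1)) := by
          intro h
          exact hw (by
            intro x hx
            rcases List.mem_cons.mp hx with h' | h'
            · exact h'
            · exact h x h')
        obtain ⟨j, v, hjv⟩ := decomp u hu
        exact ⟨j+1, v, by simp [hjv, List.replicate_succ]⟩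

/-- `mc` agrees with `c` on pure words. -/
lemma mc_pure (c : FPS 1) (d : FPST 1 1) (w : Word 1) (hw : ∀ x ∈ w, x = (none : Letter 1)) :
    mc c d w = c w := by
  unfold mc
  rw [Finset.sum_congr rfl (fun k _ => Finset.sum_congr rfl
    (fun η _ => by rw [wmc_pure d (List.ofFn η) w hw]))]
  rw [sum_helper c 1 w w.length le_rfl, mul_one]

end CFSAux

open CFS in
/-- For `X = {x_0, x_1}`, if `c ∈ ℝ⟨⟨X⟩⟩` has relative degree `r_c`
and `d(𝟙) ≠ 0`, then `c ⟲ d` has relative degree `r_c`. -/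
theorem mixedComp_relative_degree (c d : FPS 1) (r : ℕ)
    (hc : hasRelDeg c r) (hd : d [] ≠ 0) :
    hasRelDeg (mc1 c d) r := by
  obtain ⟨⟨hr1, hsupp, _⟩, hcoef⟩ := hc
  set w₀ : Word 1 := List.replicate (r-1) (none : Letter 1) ++ [some 0] with hw₀def
  set dd : FPST 1 1 := fun _ => d with hdd
  -- basic facts about w₀
  have hw₀impure : ¬ ∀ x ∈ w₀, x = (none : Letter 1) := by
    intro h
    have := h (some 0) (by simp [hw₀def])
    simp at this
  have hw₀len : w₀.length = r := by
    simp [hw₀def]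
    omega
  -- c is nonzero at w₀
  have hcw₀ : c w₀ ≠ 0 := by
    intro h
    apply hcoef
    simp only [forcedPart, natPart, ← hw₀def, hw₀impure, if_neg, h, zero_sub, neg_eq_zero]
    simp [hw₀impure]
  -- c vanishes on shallow impure words
  have hc0 : ∀ (j : ℕ) (η' : Word 1), j < r - 1 →
      c (List.replicate j none ++ some 0 :: η') = 0 := by
    intro j η' hj
    by_contra h
    have himp : ¬ ∀ x ∈ (List.replicate j none ++ some 0 :: η'), x = (none : Letter 1) := by
      intro hall
      have := hall (some 0) (by simp)
      simp at this
    have hne : forcedPart c (List.replicate j none ++ some 0 :: η') ≠ 0 := by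
      simp only [forcedPart, natPart, himp, if_neg]
      simpa [himp] using sub_ne_zero_of_ne (show c _ ≠ (0:ℝ) from h)
    obtain ⟨v, hv, heq⟩ := hsupp _ hne
    have hdrop := congrArg (List.drop j) heq
    rw [List.drop_left' List.length_replicate] at hdrop
    rw [List.drop_append_of_le_length (by simp; omega), List.drop_replicate] at hdrop
    obtain ⟨t, ht⟩ : ∃ t, r - 1 - j = t + 1 := ⟨r - 1 - j - 1, by omega⟩
    rw [ht, List.replicate_succ, List.cons_append] at hdrop
    simp at hdrop
  -- mc vanishes on shallow impure words
  have hshallow : ∀ (j : ℕ) (v : Word 1), j < r - 1 →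
      mc1 c d (List.replicate j none ++ some 0 :: v) = 0 := by
    intro j v hj
    unfold mc1 mc
    apply Finset.sum_eq_zero
    intro k _
    apply Finset.sum_eq_zero
    intro η _
    by_cases hz : wmc dd (List.ofFn η) (List.replicate j none ++ some 0 :: v) = 0
    · rw [hz, mul_zero]
    · obtain ⟨η', hη⟩ := CFSAux.wmc_shape dd j (List.ofFn η) v hz
      rw [hη, hc0 j η' hj, zero_mul]
  -- coefficient of mc at w₀
  have hmcw₀ : mc1 c d w₀ = c w₀ * d [] := by
    unfold mc1 mc
    rw [Finset.sum_congr rfl (fun k hk => Finset.sum_congr rfl (fun η _ => by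
      rw [CFSAux.wmc_target dd (r-1) (List.ofFn η)
        (by
          have : k ≤ w₀.length := by
            have := Finset.mem_range.mp hk; omega
          simp only [List.length_ofFn]
          omega)]))]
    exact CFSAux.sum_helper c (dd 0 []) w₀ w₀.length le_rfl
  -- forced part of mc vanishes on pure words
  have hfpure : ∀ w : Word 1, (∀ x ∈ w, x = (none : Letter 1)) →
      forcedPart (mc1 c d) w = 0 := by
    intro w hw
    simp only [forcedPart, natPart, if_pos hw, sub_self]
  -- forced part of mc agrees with mc on impure words
  have hfimp : ∀ w : Word 1, ¬ (∀ x ∈ w, x = (none : Letter 1)) →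
      forcedPart (mc1 c d) w = mc1 c d w := by
    intro w hw
    simp [forcedPart, natPart, hw]
  have hfw₀ : forcedPart (mc1 c d) w₀ ≠ 0 := by
    rw [hfimp w₀ hw₀impure, hmcw₀]
    exact mul_ne_zero hcw₀ hd
  refine ⟨⟨hr1, ?_, ?_⟩, hfw₀⟩
  · -- support of forced part in x_0^{r-1} X^+
    intro w hforced
    by_cases hw : ∀ x ∈ w, x = (none : Letter 1)
    · exact absurd (hfpure w hw) hforced
    · obtain ⟨j, v, rfl⟩ := CFSAux.decomp w hw
      have hj : ¬ j < r - 1 := by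
        intro hj
        apply hforced
        rw [hfimp _ hw, hshallow j v hj]
      refine ⟨List.replicate (j - (r-1)) none ++ some 0 :: v, by simp, ?_⟩
      rw [← List.append_assoc, ← List.replicate_add]
      congr 2
      omega
  · -- not contained in x_0^r X^+
    intro hall
    obtain ⟨v, hv, heq⟩ := hall w₀ hfw₀
    have hlen := congrArg List.length heq
    simp only [hw₀len, List.length_append, List.length_replicate] at hlen
    have : v.length ≥ 1 := List.length_pos_iff.mpr hv
    omega
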